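/- arXiv:2303.03077 — 3 statements merged into one kernel-verified Lean document; each statement's English description precedes it below -/
import Mathlib

section
/- The sequential resale auction is individually rational: when all buyers follow the intended strategy (truthful bids, maximum aggregation, passing to one inviter), every buyer's utility is nonnegative. Specifically, the winner w has utility v_w - p̄_w ≥ 0, every intermediate local seller has utility max(p̄_i, b^{2nd}_i) - p̄_i ≥ 0, and all other buyers have utility 0. -/
open Finset

/-- Max of `f` over a finite set, with floor 0 (bids are nonnegative; empty set gives 0). -/
noncomputable def fmax {V : Type} [DecidableEq V] (s : Finset V) (f : V → ℝ) : ℝ :=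
  s.fold max 0 f

/-- The sequential resale auction is individually rational: when all buyers
follow the intended strategy, every buyer's utility is nonnegative.  The winner `h k`
has utility `v (h k) - p k ≥ 0` (she keeps the item since her valuation is at least
the maximum of her purchasing price and the second-highest aggregated bid among her
children), every intermediate local seller `h j` has utility
`max (p j) (b²ⁿᵈ) - p j ≥ 0`, and every other buyer has utility 0. -/
theorem sra_individually_rational
    {V : Type} [Fintype V] [DecidableEq V]
    (children : V → Finset V) (v b : V → ℝ) (S : V)
    (hv : ∀ i, 0 ≤ v i)
    -- the resale path h 0 = S, ..., h k, ending at the winner w = h k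
    (h : ℕ → V) (k : ℕ) (hh0 : h 0 = S)
    -- purchasing prices along the path
    (p : ℕ → ℝ) (hp0 : p 0 = 0)
    (hp : ∀ j < k, p (j + 1) = max (p j) (fmax ((children (h j)).erase (h (j + 1))) b))
    -- the winner keeps the item: her valuation is at least the max of her
    -- purchasing price and the second-highest aggregated bid `wsnd` among her children
    (wsnd : ℝ) (hwsnd : 0 ≤ wsnd)
    (hkeep : max (p k) wsnd ≤ v (h k))
    -- the utilities of all buyers
    (u : V → ℝ)
    (huw : u (h k) = v (h k) - p k)
    (humid : ∀ j, 0 < j → j < k →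
      u (h j) = max (p j) (fmax ((children (h j)).erase (h (j + 1))) b) - p j)
    (huother : ∀ i, (∀ j ≤ k, i ≠ h j) → u i = 0) :
    ∀ i, i ≠ S → 0 ≤ u i := by
  intro i hiS
  by_cases hall : ∀ j ≤ k, i ≠ h j
  · rw [huother i hall]
  · push_neg at hall
    obtain ⟨j, hjk, hij⟩ := hall
    rcases Nat.eq_zero_or_pos j with rfl | hj
    · exact absurd (hij.trans hh0) hiS
    · rcases eq_or_lt_of_le hjk with rfl | hjlt
      · rw [hij, huw]
        linarith [le_trans (le_max_left (p j) wsnd) hkeep]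
      · rw [hij, humid j hj hjlt]
        have := le_max_left (p j) (fmax ((children (h j)).erase (h (j + 1))) b)
        linarith
end

section
/- In the sequential resale auction on a rooted tree with truthful aggregation, the winner's payment (purchasing price) does not depend on her own bid: if the winner changes her bid to any value at least her true valuation, the resale path and her purchasing price remain unchanged. -/
open Finset

lemma fmax_congr {V : Type} [DecidableEq V] {s : Finset V} {f g : V → ℝ}
    (h : ∀ x ∈ s, f x = g x) : fmax s f = fmax s g :=
  Finset.fold_congr h

lemma fmax_mono {V : Type} [DecidableEq V] {s : Finset V} {f g : V → ℝ}
    (h : ∀ x ∈ s, f x ≤ g x) : fmax s f ≤ fmax s g := by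
  classical
  induction s using Finset.induction with
  | empty => simp [fmax]
  | @insert a s hx ih =>
    rw [fmax, fmax, Finset.fold_insert hx, Finset.fold_insert hx]
    exact max_le_max (h a (Finset.mem_insert_self a s))
      (ih fun x hxs => h x (Finset.mem_insert_of_mem hxs))

/-- In the sequential resale auction on a rooted tree with truthful
aggregation, the winner's payment does not depend on her own bid: if the winner
`w = h k` changes her bid from `v w` to any value `v' w ≥ v w` (everyone else's
bid unchanged), the resale path remains a valid resale path (each step still goes
to a child with the highest aggregated bid) and all purchasing prices along the
path are unchanged. -/
theorem sra_winner_payment_bid_independent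
    {V : Type} [Fintype V] [DecidableEq V]
    (children subtree : V → Finset V) (v v' b b' : V → ℝ) (S : V)
    (hv : ∀ i, 0 ≤ v i)
    -- rooted tree structure
    (hsubtree : ∀ i, subtree i = insert i ((children i).biUnion subtree))
    (hnotmem : ∀ i, ∀ c ∈ children i, i ∉ subtree c)
    (hdisj : ∀ i, ∀ c ∈ children i, ∀ c' ∈ children i, c ≠ c' →
      Disjoint (subtree c) (subtree c'))
    -- aggregated bids under the original and deviated bid profiles
    (hb : ∀ i, b i = max (v i) (fmax (children i) b))
    (hb' : ∀ i, b' i = max (v' i) (fmax (children i) b'))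
    -- original resale path and purchasing prices
    (h : ℕ → V) (k : ℕ) (hh0 : h 0 = S)
    (hchild : ∀ j < k, h (j + 1) ∈ children (h j))
    (htop : ∀ j < k, ∀ c ∈ children (h j), b c ≤ b (h (j + 1)))
    (p : ℕ → ℝ) (hp0 : p 0 = 0)
    (hp : ∀ j < k, p (j + 1) = max (p j) (fmax ((children (h j)).erase (h (j + 1))) b))
    -- the winner w = h k keeps the item under truthful bidding
    (hkeep : max (p k) (fmax ((children (h k)).erase (h k)) b) ≤ v (h k))
    -- the winner deviates to a bid at least her true valuation; others unchanged
    (hdev : ∀ i, i ≠ h k → v' i = v i) (hge : v (h k) ≤ v' (h k))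
    -- purchasing prices recomputed under the deviated profile along the same path
    (p' : ℕ → ℝ) (hp'0 : p' 0 = 0)
    (hp' : ∀ j < k, p' (j + 1) = max (p' j) (fmax ((children (h j)).erase (h (j + 1))) b')) :
    (∀ j < k, ∀ c ∈ children (h j), b' c ≤ b' (h (j + 1))) ∧ (∀ j ≤ k, p' j = p j) := by

  classical
  -- basic tree facts
  have hself : ∀ i, i ∈ subtree i := by
    intro i; rw [hsubtree i]; exact Finset.mem_insert_self _ _
  have hsub : ∀ i, ∀ c ∈ children i, subtree c ⊆ subtree i := by
    intro i c hc x hx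
    rw [hsubtree i]
    exact Finset.mem_insert_of_mem (Finset.mem_biUnion.mpr ⟨c, hc, hx⟩)
  have hcard : ∀ i, ∀ c ∈ children i, (subtree c).card < (subtree i).card := by
    intro i c hc
    exact Finset.card_lt_card ⟨hsub i c hc,
      fun h2 => hnotmem i c hc (h2 (hself i))⟩
  -- b ≤ b'
  have hvv' : ∀ i, v i ≤ v' i := by
    intro i
    by_cases hi : i = h k
    · rw [hi]; exact hge
    · rw [hdev i hi]
  have hbb'aux : ∀ n, ∀ i, (subtree i).card ≤ n → b i ≤ b' i := by
    intro n
    induction n with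
    | zero =>
      intro i hi
      exact absurd (Finset.card_pos.mpr ⟨i, hself i⟩) (by omega)
    | succ n ih =>
      intro i hi
      rw [hb i, hb' i]
      exact max_le_max (hvv' i) (fmax_mono fun c hc =>
        ih c (by have := hcard i c hc; omega))
  have hbb' : ∀ i, b i ≤ b' i := fun i => hbb'aux _ i le_rfl
  -- b' = b on subtrees not containing the winner
  have heqaux : ∀ n, ∀ i, (subtree i).card ≤ n → h k ∉ subtree i → b' i = b i := by
    intro n
    induction n with
    | zero =>
      intro i hi
      exact absurd (Finset.card_pos.mpr ⟨i, hself i⟩) (by omega)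
    | succ n ih =>
      intro i hi hw
      have hne : i ≠ h k := fun he => hw (he ▸ hself i)
      rw [hb i, hb' i, hdev i hne]
      congr 1
      exact fmax_congr fun c hc =>
        ih c (by have := hcard i c hc; omega)
          (fun hm => hw (hsub i c hc hm))
  have heq : ∀ i, h k ∉ subtree i → b' i = b i := fun i => heqaux _ i le_rfl
  -- the winner is in subtree of every node on the path
  have hin : ∀ d, ∀ j, j + d = k → h k ∈ subtree (h j) := by
    intro d
    induction d with
    | zero => intro j hj; rw [show j = k by omega]; exact hself _
    | succ d ih =>
      intro j hj
      exact hsub (h j) (h (j+1)) (hchild j (by omega)) (ih (j+1) (by omega))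
  have hinpath : ∀ j ≤ k, h k ∈ subtree (h j) := fun j hj => hin (k - j) j (by omega)
  -- siblings of path nodes don't contain the winner
  have hsib : ∀ j < k, ∀ c ∈ children (h j), c ≠ h (j+1) → h k ∉ subtree c := by
    intro j hj c hc hne hw
    exact (hdisj (h j) c hc (h (j+1)) (hchild j hj) hne).forall_ne_finset hw
      (hinpath (j+1) (by omega)) rfl
  constructor
  · intro j hj c hc
    by_cases hne : c = h (j+1)
    · rw [hne]
    · rw [heq c (hsib j hj c hc hne)]
      exact le_trans (htop j hj c hc) (hbb' _)
  · intro j hj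
    induction j with
    | zero => rw [hp0, hp'0]
    | succ j ih =>
      rw [hp j (by omega), hp' j (by omega), ih (by omega)]
      congr 1
      exact fmax_congr fun c hc =>
        heq c (hsib j (by omega) c (Finset.mem_of_mem_erase hc)
          (Finset.ne_of_mem_erase hc))
end

section
/- The seller's revenue in the sequential resale auction is at least the revenue of the second-price (VCG) auction among the seller's direct neighbors: the second-highest aggregated bid among the seller's children in the aggregation tree is greater than or equal to the second-highest own bid among the seller's children. -/
open Finset

/-- Second-highest value of `f` over a nonempty finite set: the minimum, over choices of
a removed element, of the maximum over the rest. -/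
noncomputable def smax {V : Type} [DecidableEq V] (s : Finset V) (hne : s.Nonempty)
    (f : V → ℝ) : ℝ :=
  s.inf' hne (fun c => fmax (s.erase c) f)

lemma le_fmax {V : Type} [DecidableEq V] {s : Finset V} {f : V → ℝ} {x : V}
    (hx : x ∈ s) : f x ≤ fmax s f :=
  (Finset.le_fold_max _).2 (Or.inr ⟨x, hx, le_rfl⟩)

/-- The seller's revenue in the sequential resale auction is at least the
revenue of the second-price (VCG) auction among the seller's direct neighbors: the
second-highest aggregated bid among the seller's children is at least the second-highest
own bid among the seller's children, since each child's aggregated bid is the maximum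
bid in her subtree and hence at least her own bid. -/
theorem sra_revenue_ge_vcg_without_diffusion
    {V : Type} [Fintype V] [DecidableEq V]
    (S : V) (childrenS : Finset V) (subtree : V → Finset V) (v b : V → ℝ)
    (hv : ∀ i, 0 ≤ v i)
    -- the seller has at least two children
    (hcard : 2 ≤ childrenS.card) (hne : childrenS.Nonempty)
    -- each child's aggregated bid is the maximum bid in her subtree
    (hb : ∀ c ∈ childrenS, b c = fmax (subtree c) v)
    (hmem : ∀ c ∈ childrenS, c ∈ subtree c) :
    smax childrenS hne v ≤ smax childrenS hne b := by
  have hvb : ∀ c ∈ childrenS, v c ≤ b c := fun c hc => by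
    rw [hb c hc]; exact le_fmax (hmem c hc)
  apply Finset.le_inf'
  intro c hc
  refine le_trans (Finset.inf'_le _ hc) ?_
  exact fmax_mono fun x hx => hvb x (Finset.mem_of_mem_erase hx)
end
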